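/- Let G be a finite connected d-regular non-bipartite graph with no self-loops added (d⁺ = d), and let 2φ(G)+1 be its odd girth (the length of the shortest odd cycle of G), with φ(G) ≥ 2. Then there exist an initial load distribution, cyclic orderings of the outgoing edges at each node, and initial rotor positions, such that in the resulting execution of the Rotor-Router algorithm the discrepancy at every time step is at least d·(φ(G) − 1); in particular the Rotor-Router cannot achieve discrepancy better than c·d·φ(G) for some universal constant c > 0. -/

import Mathlib

/-!
Pick a vertex `c₀` with a neighbour and layer the graph by the distance `ℓ` from `c₀`, capped
at `φ`. Below level `φ` no edge joins two vertices of the same layer, as it would close an odd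
walk shorter than `2φ + 1`. Give every vertex the base load `2φ - ℓ` on even and `ℓ` on odd
levels, and weight each edge `(u, v)` by the base load of `u` plus at most one extra token, so
that the two directions of every edge carry `2φ + 1` tokens together. Rotors can then be set so
that the rotor-router sends these weights at odd steps and at even steps returns every token
along the edge it arrived by. The loads alternate between two configurations, and in both of them
`c₀` and its neighbour differ by at least `2d(φ - 1)`.
-/

open Finset

/-- A `d`-regular connected symmetric graph `G` together with `dSelf` self-loops
attached to every node (the balancing graph `G⁺`). -/
structure LBSetup (V : Type) [Fintype V] [DecidableEq V] where
  d : ℕ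
  dSelf : ℕ
  Adj : V → V → Bool
  symm : ∀ u v : V, Adj u v → Adj v u
  loopless : ∀ u : V, ¬ Adj u u
  regular : ∀ u : V, (Finset.univ.filter fun v => Adj u v).card = d
  connected : ∀ u v : V, Relation.ReflTransGen (fun a b => Adj a b = true) u v

variable {V : Type} [Fintype V] [DecidableEq V]

/-- Degree `d⁺ = d + d°` of the balancing graph. -/
def LBSetup.dPlus (S : LBSetup V) : ℕ := S.d + S.dSelf

/-- Neighbours of `u` in the original graph. -/
def LBSetup.nbrs (S : LBSetup V) (u : V) : Finset V :=
  Finset.univ.filter fun v => S.Adj u v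

/-- A load-balancing algorithm on the balancing graph `G⁺`: integer flows on
original edges (`f`) and on self-loops (`g`), and load vectors `x`, satisfying
the conservation laws. Time steps start at `t = 1`. -/
structure LBAlgo (S : LBSetup V) where
  f : ℕ → V → V → ℕ
  g : ℕ → V → Fin S.dSelf → ℕ
  x : ℕ → V → ℕ
  flow_out : ∀ t, 1 ≤ t → ∀ u : V,
    x t u = (∑ v ∈ S.nbrs u, f t u v) + ∑ i : Fin S.dSelf, g t u i
  flow_in : ∀ t, 1 ≤ t → ∀ u : V,
    x (t + 1) u = (∑ v ∈ S.nbrs u, f t v u) + ∑ i : Fin S.dSelf, g t u i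

/-- Cumulative flow on the original edge `(u, v)` up to time `t`. -/
def LBAlgo.F {S : LBSetup V} (A : LBAlgo S) (t : ℕ) (u v : V) : ℕ :=
  ∑ τ ∈ Finset.Icc 1 t, A.f τ u v

/-- Cumulative flow on the `i`-th self-loop of `u` up to time `t`. -/
def LBAlgo.Gcum {S : LBSetup V} (A : LBAlgo S) (t : ℕ) (u : V) (i : Fin S.dSelf) : ℕ :=
  ∑ τ ∈ Finset.Icc 1 t, A.g τ u i

/-- Cumulative δ-fairness: every edge (original or self-loop) of `u` carries at least
`⌊x_t(u)/d⁺⌋` tokens in every step, and cumulative flows on any two original edges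
of `u` differ by at most `δ`. -/
def CumFair (S : LBSetup V) (A : LBAlgo S) (δ : ℝ) : Prop :=
  (∀ t, 1 ≤ t → ∀ u : V,
      (∀ v : V, S.Adj u v → A.x t u / S.dPlus ≤ A.f t u v) ∧
      (∀ i : Fin S.dSelf, A.x t u / S.dPlus ≤ A.g t u i)) ∧
  (∀ t : ℕ, ∀ u v w : V, S.Adj u v → S.Adj u w →
      |(A.F t u v : ℝ) - (A.F t u w : ℝ)| ≤ δ)

/-- Maximum load at time `t`. -/
def maxLoad {S : LBSetup V} [Nonempty V] (A : LBAlgo S) (t : ℕ) : ℕ :=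
  Finset.univ.sup' Finset.univ_nonempty (A.x t)

/-- Minimum load at time `t`. -/
def minLoad {S : LBSetup V} [Nonempty V] (A : LBAlgo S) (t : ℕ) : ℕ :=
  Finset.univ.inf' Finset.univ_nonempty (A.x t)

/-- Discrepancy at time `t`. -/
def disc {S : LBSetup V} [Nonempty V] (A : LBAlgo S) (t : ℕ) : ℕ :=
  maxLoad A t - minLoad A t

/-- Transition matrix `P` of the balancing graph `G⁺`. -/
noncomputable def LBSetup.P (S : LBSetup V) : Matrix V V ℝ :=
  Matrix.of fun u v =>
    if S.Adj u v then (1 : ℝ) / S.dPlus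
    else if u = v then (S.dSelf : ℝ) / S.dPlus else 0

/-- `μ` is the eigenvalue gap of `P`: `μ = 1 - λ₂` where `λ₂` is the
largest eigenvalue of `P` different from `1`. -/
def LBSetup.IsEigGap (S : LBSetup V) (μ : ℝ) : Prop :=
  ∃ lam : ℝ, μ = 1 - lam ∧ lam ∈ spectrum ℝ S.P ∧ lam ≠ 1 ∧
    ∀ x ∈ spectrum ℝ S.P, x ≠ 1 → x ≤ lam

/-- The underlying simple graph of the setup. -/
def LBSetup.toSimpleGraph (S : LBSetup V) : SimpleGraph V where
  Adj u v := S.Adj u v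
  symm := ⟨fun u v h => S.symm u v h⟩
  loopless := ⟨fun u h => S.loopless u h⟩

/-- Rotor-router execution on a graph without self-loops: `ord u` is the cyclic ordering
of the `d` outgoing edges of `u` and `ρ t u` is the rotor position of `u` at step `t`.
At step `t`, node `u` sends its `x_t(u)` tokens one at a time along consecutive outgoing
edges in cyclic order starting from the rotor, then advances the rotor past the last used
edge: the edge at cyclic position `i` receives `⌊x_t(u)/d⌋` tokens plus one extra token
iff `(i − ρ_t(u)) mod d < x_t(u) mod d`. -/
def IsRotorRouter (S : LBSetup V) (A : LBAlgo S)
    (ord : ∀ u : V, Fin S.d ≃ {v : V // S.Adj u v})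
    (ρ : ℕ → V → Fin S.d) : Prop :=
  ∀ t, 1 ≤ t → ∀ u : V,
    (∀ i : Fin S.d,
      A.f t u (ord u i).1 =
        A.x t u / S.d +
          (if ((i : ℕ) + S.d - ((ρ t u : ℕ) % S.d)) % S.d < A.x t u % S.d
            then 1 else 0)) ∧
    ((ρ (t + 1) u : ℕ) = ((ρ t u : ℕ) + A.x t u) % S.d)

namespace SimpleGraph

variable {α : Type*} [DecidableEq α] {G : SimpleGraph α}

lemma Walk.exists_eq_append_closed_of_not_isPath {u v : α} (p : G.Walk u v) (hp : ¬ p.IsPath) :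
    ∃ (x : α) (q : G.Walk u x) (r : G.Walk x x) (s : G.Walk x v),
      r.length ≠ 0 ∧ p = q.append (r.append s) := by
  induction p with
  | nil => exact absurd .nil hp
  | @cons a b v hab p ih =>
    by_cases hpath : p.IsPath
    · have ha : a ∈ p.support := of_not_not fun ha => hp (hpath.cons ha)
      exact ⟨a, .nil, .cons hab (p.takeUntil a ha), p.dropUntil a ha, by simp,
        by rw [nil_append, cons_append, take_spec]⟩
    · obtain ⟨x, q, r, s, hr, rfl⟩ := ih hpath
      exact ⟨x, .cons hab q, r, s, hr, rfl⟩

lemma Walk.exists_isCycle_odd_length_le {u : α} (w : G.Walk u u) (hw : Odd w.length) :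
    ∃ (v : α) (c : G.Walk v v), c.IsCycle ∧ Odd c.length ∧ c.length ≤ w.length := by
  obtain ⟨n, hn⟩ : ∃ n, w.length = n := ⟨_, rfl⟩
  induction n using Nat.strong_induction_on generalizing u with
  | _ n ih =>
  cases w with
  | nil => simp at hw
  | cons hab p =>
    by_cases hp : p.IsPath
    · refine ⟨u, .cons hab p, ?_, hw, le_rfl⟩
      have hp0 : p.length ≠ 0 := fun h0 => G.loopless.irrefl _ (p.eq_of_length_eq_zero h0 ▸ hab)
      rw [isCycle_iff_isPath_tail_and_le_length]
      refine ⟨by simpa using hp, ?_⟩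
      simp only [length_cons, Nat.odd_iff] at hw ⊢
      omega
    · obtain ⟨x, q, r, s, hr, rfl⟩ := p.exists_eq_append_closed_of_not_isPath hp
      simp only [length_cons, length_append, Nat.odd_iff] at hn hw
      rcases Nat.even_or_odd r.length with hr' | hr'
      · have hodd : Odd (cons hab (q.append s)).length := by
          rw [Nat.even_iff] at hr'
          simp only [length_cons, length_append, Nat.odd_iff]
          omega
        obtain ⟨v, c, hc, hco, hcl⟩ :=
          ih _ (by simp only [length_cons, length_append]; omega) _ hodd rfl
        exact ⟨v, c, hc, hco, by simp only [length_cons, length_append] at hcl ⊢; omega⟩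
      · obtain ⟨v, c, hc, hco, hcl⟩ := ih r.length (by omega) r hr' rfl
        exact ⟨v, c, hc, hco, by simp only [length_cons, length_append] at hcl ⊢; omega⟩

lemma le_dist_of_adj_of_dist_eq {k : ℕ}
    (hgirth : ∀ (v : α) (c : G.Walk v v), c.IsCycle → Odd c.length → 2 * k + 1 ≤ c.length)
    {c₀ u v : α} (hu : G.Reachable c₀ u) (h : G.Adj u v) (he : G.dist c₀ u = G.dist c₀ v) :
    k ≤ G.dist c₀ u := by
  obtain ⟨p, hp⟩ := hu.exists_walk_length_eq_dist
  obtain ⟨q, hq⟩ := (hu.trans h.reachable).exists_walk_length_eq_dist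
  obtain ⟨x, c, hc, hodd, hle⟩ := (p.append (.cons h q.reverse)).exists_isCycle_odd_length_le
    (by simp [hp, hq, ← he])
  have := hgirth x c hc hodd
  simp only [Walk.length_append, Walk.length_cons, Walk.length_reverse] at hle
  omega

end SimpleGraph

lemma mul_add_div_add_ite_lt_mod {d r j : ℕ} (a : ℕ) (hr : r ≤ d) (hj : j < d) :
    (d * a + r) / d + (if j < (d * a + r) % d then 1 else 0) = a + if j < r then 1 else 0 := by
  have hd : 0 < d := by omega
  rcases hr.lt_or_eq with hr | rfl
  · rw [Nat.mul_add_div hd, Nat.div_eq_of_lt hr, Nat.mul_add_mod, Nat.mod_eq_of_lt hr, add_zero]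
  · rw [← Nat.mul_succ, Nat.mul_div_cancel_left _ hd, Nat.mul_mod_right]
    simp [hj]

lemma add_sub_mod_mod_lt_sub_iff {d b i : ℕ} (hb : b ≤ d) (hi : i < d) :
    (i + d - b % d) % d < d - b ↔ b ≤ i := by
  rcases hb.lt_or_eq with hb | rfl
  · rw [Nat.mod_eq_of_lt hb]
    rcases le_or_gt b i with hbi | hbi
    · rw [show i + d - b = i - b + d by omega, Nat.add_mod_right, Nat.mod_eq_of_lt (by omega)]
      omega
    · rw [Nat.mod_eq_of_lt (by omega)]
      omega
  · simp only [Nat.mod_self, Nat.sub_zero, Nat.add_mod_right, Nat.sub_self]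
    omega

lemma Fin.sum_univ_ite_val_lt {d b : ℕ} (hb : b ≤ d) :
    ∑ i : Fin d, (if (i : ℕ) < b then 1 else 0) = b := by
  rw [Fin.sum_univ_eq_sum_range (fun i => if i < b then 1 else 0), sum_boole, Nat.cast_id,
    show {i ∈ range d | i < b} = range b by ext; simp; omega, card_range]

lemma Fintype.exists_equivFin_prop_iff_lt_card {α : Type*} [Fintype α] (p : α → Prop)
    [DecidablePred p] {n : ℕ} (hn : Fintype.card α = n) :
    ∃ e : Fin n ≃ α, ∀ i, p (e i) ↔ (i : ℕ) < Fintype.card {x // p x} := by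
  have hc : Fintype.card {x // ¬ p x} = n - Fintype.card {x // p x} := by
    rw [Fintype.card_subtype_compl, hn]
  have hb : Fintype.card {x // p x} ≤ n := hn ▸ Fintype.card_subtype_le p
  let e : Fin (Fintype.card {x // p x} + (n - Fintype.card {x // p x})) ≃ α :=
    finSumFinEquiv.symm.trans ((Equiv.sumCongr (Fintype.equivFin _).symm
      (Fintype.equivFinOfCardEq hc).symm).trans (Equiv.sumCompl p))
  have he : ∀ j, p (e j) ↔ (j : ℕ) < Fintype.card {x // p x} := by
    refine Fin.addCases (fun j => ?_) (fun j => ?_)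
    · simpa [e] using ((Fintype.equivFin _).symm j).2
    · simpa [e] using ((Fintype.equivFinOfCardEq hc).symm j).2
  exact ⟨(finCongr (by omega)).trans e, fun i => he _⟩

namespace LBSetup

variable (S : LBSetup V)

lemma mem_nbrs {u v : V} : v ∈ S.nbrs u ↔ S.Adj u v := by
  simp [nbrs]

lemma card_nbrs (u : V) : #(S.nbrs u) = S.d := S.regular u

lemma card_adj (u : V) : Fintype.card {v // S.Adj u v} = S.d := by
  rw [Fintype.card_subtype]
  exact S.regular u

lemma sum_nbrs_eq_sum_fin (u : V) (ord : Fin S.d ≃ {v // S.Adj u v}) (g : V → ℕ) :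
    ∑ v ∈ S.nbrs u, g v = ∑ i, g (ord i) := by
  rw [Finset.sum_subtype _ (fun v => S.mem_nbrs), Equiv.sum_comp ord (fun v => g v)]

lemma reachable (u v : V) : S.toSimpleGraph.Reachable u v :=
  (SimpleGraph.reachable_iff_reflTransGen u v).2 (S.connected u v)

end LBSetup

lemma sub_le_disc {S : LBSetup V} [Nonempty V] (A : LBAlgo S) (t : ℕ) (p q : V) :
    A.x t p - A.x t q ≤ disc A t :=
  tsub_le_tsub (le_sup' _ (mem_univ p)) (inf'_le _ (mem_univ q))

section Reversal

variable (S : LBSetup V) (w : V → V → ℕ)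

def reversalAlgo : LBAlgo S where
  f t u v := if Odd t then w u v else w v u
  g _ _ _ := 0
  x t u := if Odd t then ∑ v ∈ S.nbrs u, w u v else ∑ v ∈ S.nbrs u, w v u
  flow_out t _ u := by split_ifs <;> simp
  flow_in t _ u := by rcases Nat.even_or_odd t with ht | ht <;> simp [ht, Nat.not_odd_iff_even]

variable {S w}

lemma reversalAlgo_x_of_odd {t : ℕ} (ht : Odd t) (u : V) :
    (reversalAlgo S w).x t u = ∑ v ∈ S.nbrs u, w u v :=
  if_pos ht

lemma reversalAlgo_x_of_even {t : ℕ} (ht : Even t) (u : V) :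
    (reversalAlgo S w).x t u = ∑ v ∈ S.nbrs u, w v u :=
  if_neg (Nat.not_odd_iff_even.2 ht)

lemma sum_nbrs_add_sum_nbrs {C : ℕ} (hC : ∀ u v, S.Adj u v → w u v + w v u = C) (u : V) :
    ∑ v ∈ S.nbrs u, w u v + ∑ v ∈ S.nbrs u, w v u = S.d * C := by
  rw [← sum_add_distrib, sum_congr rfl fun v hv => hC u v ((S.mem_nbrs).1 hv), sum_const,
    S.card_nbrs, smul_eq_mul]

lemma sub_le_disc_reversalAlgo [Nonempty V] {C : ℕ}
    (hC : ∀ u v, S.Adj u v → w u v + w v u = C) (t : ℕ) (p q : V) :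
    ∑ v ∈ S.nbrs p, w p v - ∑ v ∈ S.nbrs q, w q v ≤ disc (reversalAlgo S w) t := by
  rcases Nat.even_or_odd t with ht | ht
  · have := sub_le_disc (reversalAlgo S w) t q p
    rw [reversalAlgo_x_of_even ht, reversalAlgo_x_of_even ht] at this
    have := sum_nbrs_add_sum_nbrs hC p
    have := sum_nbrs_add_sum_nbrs hC q
    omega
  · simpa only [reversalAlgo_x_of_odd ht] using sub_le_disc (reversalAlgo S w) t p q

lemma exists_equivFin_nbrs_eq_add_ite_lt {u : V} {a : ℕ}
    (hw : ∀ v, S.Adj u v → w u v = a ∨ w u v = a + 1) :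
    ∃ (b : ℕ) (e : Fin S.d ≃ {v // S.Adj u v}), b ≤ S.d ∧
      (∀ i, w u (e i) = a + if (i : ℕ) < b then 1 else 0) ∧
      ∑ v ∈ S.nbrs u, w u v = S.d * a + b := by
  obtain ⟨e, he⟩ := Fintype.exists_equivFin_prop_iff_lt_card
    (fun v : {v // S.Adj u v} => w u v = a + 1) (S.card_adj u)
  have hb : Fintype.card {v : {v // S.Adj u v} // w u v = a + 1} ≤ S.d :=
    S.card_adj u ▸ Fintype.card_subtype_le _
  have hflow (i : Fin S.d) :
      w u (e i) = a + if (i : ℕ) < Fintype.card {v : {v // S.Adj u v} // w u v = a + 1}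
        then 1 else 0 := by
    have := he i
    rcases hw _ (e i).2 with h | h <;> split_ifs <;> simp_all
  refine ⟨_, e, hb, hflow, ?_⟩
  rw [S.sum_nbrs_eq_sum_fin u e, sum_congr rfl fun i _ => hflow i, sum_add_distrib,
    sum_const, card_univ, Fintype.card_fin, smul_eq_mul, Fin.sum_univ_ite_val_lt hb]

theorem exists_isRotorRouter_reversalAlgo (hd : 0 < S.d) (a : V → ℕ) {C : ℕ}
    (hw : ∀ u v, S.Adj u v → w u v = a u ∨ w u v = a u + 1)
    (hC : ∀ u v, S.Adj u v → w u v + w v u = C) (ha : ∀ u, a u < C) :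
    ∃ ord ρ, IsRotorRouter S (reversalAlgo S w) ord ρ := by
  choose b ord hb hflow hout using fun u => exists_equivFin_nbrs_eq_add_ite_lt (hw u)
  have hin (u) : ∑ v ∈ S.nbrs u, w v u = S.d * (C - 1 - a u) + (S.d - b u) := by
    have hsum := sum_nbrs_add_sum_nbrs hC u
    have hC' : S.d * C = S.d * (C - 1 - a u) + S.d * a u + S.d := by
      rw [← mul_add, ← mul_add_one]
      congr 1
      have := ha u
      omega
    rw [hout, hC'] at hsum
    have := hb u
    omega
  have hback (u) (i : Fin S.d) : w (ord u i) u = (C - 1 - a u) + if b u ≤ i then 1 else 0 := by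
    have hsum := hC u _ (ord u i).2
    rw [hflow] at hsum
    have := ha u
    split_ifs at hsum ⊢ <;> omega
  -- At odd steps the rotor starts at the `b u` edges listed first, which carry the extra token;
  -- at even steps it starts right after them, so that the extra tokens go back along the others.
  refine ⟨ord, fun t u => if Odd t then ⟨0, hd⟩ else ⟨b u % S.d, Nat.mod_lt _ hd⟩,
    fun t _ u => ?_⟩
  rcases Nat.even_or_odd t with ht | ht
  · have ht' : ¬ Odd t := Nat.not_odd_iff_even.2 ht
    refine ⟨fun i => ?_, ?_⟩
    · simp only [reversalAlgo, ht', if_false, Nat.mod_mod, hin, hback,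
        mul_add_div_add_ite_lt_mod _ (Nat.sub_le S.d (b u)) (Nat.mod_lt _ hd),
        add_sub_mod_mod_lt_sub_iff (hb u) i.2]
    · simp only [reversalAlgo, ht', ht.add_one, if_true, if_false, hin, Nat.mod_add_mod]
      rw [show b u + (S.d * (C - 1 - a u) + (S.d - b u)) = S.d * (C - 1 - a u + 1) by
        rw [mul_add_one]; have := hb u; omega, Nat.mul_mod_right]
  · have ht' : ¬ Odd (t + 1) := Nat.not_odd_iff_even.2 ht.add_one
    refine ⟨fun i => ?_, ?_⟩
    · simp only [reversalAlgo, ht, if_true, Nat.zero_mod, Nat.sub_zero, Nat.add_mod_right,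
        Nat.mod_eq_of_lt i.2, hout, hflow, mul_add_div_add_ite_lt_mod _ (hb u) i.2]
    · simp only [reversalAlgo, ht, ht', if_true, if_false, hout, zero_add, Nat.mul_add_mod]

def levelLoad (k ℓ : ℕ) : ℕ := if Even ℓ then 2 * k - ℓ else ℓ

lemma levelLoad_le {k ℓ : ℕ} (h : ℓ ≤ k) : levelLoad k ℓ ≤ 2 * k := by
  unfold levelLoad
  split_ifs <;> omega

section Construction

variable (S : LBSetup V) (c₀ : V) (k : ℕ)

noncomputable def cappedDist (v : V) : ℕ := min (S.toSimpleGraph.dist c₀ v) k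

/- Tops up each edge to `2k + 1` tokens in its two directions together: the base loads of
levels `ℓ` and `ℓ + 1` add up to `2k + 1` for even `ℓ` and to `2k - 1` for odd `ℓ`, and those of
two vertices of level `k` to `2k`; the enumeration of `V` only orients the edges inside level
`k`. -/
noncomputable def extraToken (u v : V) : ℕ :=
  if cappedDist S c₀ k u = cappedDist S c₀ k v then
    if Fintype.equivFin V u < Fintype.equivFin V v then 1 else 0
  else if Even (max (cappedDist S c₀ k u) (cappedDist S c₀ k v)) then 1 else 0

noncomputable def levelWeight (u v : V) : ℕ :=
  levelLoad k (cappedDist S c₀ k u) + extraToken S c₀ k u v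

variable {S c₀ k}

lemma cappedDist_le (v : V) : cappedDist S c₀ k v ≤ k := min_le_right _ _

lemma cappedDist_self : cappedDist S c₀ k c₀ = 0 := by
  simp [cappedDist]

lemma cappedDist_of_adj {v : V} (h : S.Adj c₀ v) : cappedDist S c₀ k v = min 1 k := by
  rw [cappedDist, SimpleGraph.dist_eq_one_iff_adj.2 h]

lemma cappedDist_le_add_one_of_adj {u v : V} (h : S.Adj u v) :
    cappedDist S c₀ k v ≤ cappedDist S c₀ k u + 1 := by
  have := SimpleGraph.Adj.diff_dist_adj (G := S.toSimpleGraph) (u := c₀) h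
  unfold cappedDist
  omega

lemma cappedDist_eq_of_adj_of_eq
    (hgirth : ∀ (u : V) (w : S.toSimpleGraph.Walk u u),
      w.IsCycle → Odd w.length → 2 * k + 1 ≤ w.length)
    {u v : V} (h : S.Adj u v) (he : cappedDist S c₀ k u = cappedDist S c₀ k v) :
    cappedDist S c₀ k u = k := by
  unfold cappedDist at he ⊢
  by_contra hlt
  have := SimpleGraph.le_dist_of_adj_of_dist_eq hgirth (S.reachable c₀ u) h (by omega)
  omega

lemma extraToken_le_one (u v : V) : extraToken S c₀ k u v ≤ 1 := by
  unfold extraToken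
  split_ifs <;> omega

lemma levelWeight_eq_or (u v : V) :
    levelWeight S c₀ k u v = levelLoad k (cappedDist S c₀ k u) ∨
      levelWeight S c₀ k u v = levelLoad k (cappedDist S c₀ k u) + 1 := by
  have := extraToken_le_one (S := S) (c₀ := c₀) (k := k) u v
  unfold levelWeight
  omega

lemma levelWeight_add_levelWeight
    (hgirth : ∀ (u : V) (w : S.toSimpleGraph.Walk u u),
      w.IsCycle → Odd w.length → 2 * k + 1 ≤ w.length)
    {u v : V} (h : S.Adj u v) :
    levelWeight S c₀ k u v + levelWeight S c₀ k v u = 2 * k + 1 := by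
  have huv := cappedDist_le_add_one_of_adj (c₀ := c₀) (k := k) h
  have hvu := cappedDist_le_add_one_of_adj (c₀ := c₀) (k := k) (S.symm u v h)
  have heq := cappedDist_eq_of_adj_of_eq (c₀ := c₀) hgirth h
  have hu := cappedDist_le (S := S) (c₀ := c₀) (k := k) u
  have hv := cappedDist_le (S := S) (c₀ := c₀) (k := k) v
  have hne : Fintype.equivFin V u ≠ Fintype.equivFin V v :=
    (Fintype.equivFin V).injective.ne fun he => S.loopless u (he ▸ h)
  unfold levelWeight extraToken levelLoad
  simp only [Nat.even_iff, max_comm (cappedDist S c₀ k v)]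
  split_ifs <;> omega

end Construction

theorem rotorRouter_lower_bound_general (V : Type) [Fintype V] [DecidableEq V] [Nonempty V]
    (S : LBSetup V)
    (φ : ℕ) (hφ : 2 ≤ φ)
    (hodd : ∃ (u : V) (w : S.toSimpleGraph.Walk u u),
      w.IsCycle ∧ w.length = 2 * φ + 1)
    (hgirth : ∀ (u : V) (w : S.toSimpleGraph.Walk u u),
      w.IsCycle → Odd w.length → 2 * φ + 1 ≤ w.length) :
    ∃ (A : LBAlgo S) (ord : ∀ u : V, Fin S.d ≃ {v : V // S.Adj u v})
      (ρ : ℕ → V → Fin S.d),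
      IsRotorRouter S A ord ρ ∧
      ∀ t, 1 ≤ t → S.d * (φ - 1) ≤ disc A t := by
  obtain ⟨c₀, c, hc, -⟩ := hodd
  obtain ⟨c₁, h₀₁⟩ : ∃ c₁, S.Adj c₀ c₁ := ⟨c.snd, c.adj_snd hc.not_nil⟩
  have hd : 0 < S.d := S.card_nbrs c₀ ▸ card_pos.2 ⟨c₁, S.mem_nbrs.2 h₀₁⟩
  have hsum (u v : V) (h : S.Adj u v) := levelWeight_add_levelWeight (c₀ := c₀) hgirth h
  obtain ⟨ord, ρ, hρ⟩ := exists_isRotorRouter_reversalAlgo hd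
    (fun u => levelLoad φ (cappedDist S c₀ φ u)) (fun u v _ => levelWeight_eq_or u v)
    hsum (fun u => Nat.lt_succ_of_le (levelLoad_le (cappedDist_le u)))
  refine ⟨reversalAlgo S (levelWeight S c₀ φ), ord, ρ, hρ, fun t _ => ?_⟩
  have hout₀ : S.d * (2 * φ) ≤ ∑ v ∈ S.nbrs c₀, levelWeight S c₀ φ c₀ v :=
    S.card_nbrs c₀ ▸ card_nsmul_le_sum _ _ _ fun v _ => by
      simp [levelWeight, cappedDist_self, levelLoad]
  have hout₁ : ∑ v ∈ S.nbrs c₁, levelWeight S c₀ φ c₁ v ≤ S.d * 2 :=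
    S.card_nbrs c₁ ▸ sum_le_card_nsmul _ _ _ fun v _ => by
      have hℓ : cappedDist S c₀ φ c₁ = 1 := by rw [cappedDist_of_adj h₀₁]; omega
      have := levelWeight_eq_or (S := S) (c₀ := c₀) (k := φ) c₁ v
      simp only [hℓ, levelLoad, Nat.not_even_one, if_false] at this
      omega
  calc S.d * (φ - 1) ≤ S.d * (2 * φ) - S.d * 2 := by
        rw [← Nat.mul_sub]
        exact Nat.mul_le_mul_left _ (by omega)
    _ ≤ _ := tsub_le_tsub hout₀ hout₁
    _ ≤ disc _ t := sub_le_disc_reversalAlgo hsum t c₀ c₁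

/-- **Theorem 5 (lower bound for the rotor-router without self-loops).** Let `G` be a
connected `d`-regular non-bipartite graph (no self-loops added) with odd girth
`2·φ(G) + 1`, where `φ(G) ≥ 2`. Then there are an initial load distribution, cyclic
orderings of the outgoing edges, and initial rotor positions such that the resulting
rotor-router execution has discrepancy at least `d·(φ(G) − 1)` at every time step. -/
theorem rotorRouter_lower_bound (V : Type) [Fintype V] [DecidableEq V] [Nonempty V]
    (S : LBSetup V) (hself : S.dSelf = 0)
    (φ : ℕ) (hφ : 2 ≤ φ)
    (hodd : ∃ (u : V) (w : S.toSimpleGraph.Walk u u),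
      w.IsCycle ∧ w.length = 2 * φ + 1)
    (hgirth : ∀ (u : V) (w : S.toSimpleGraph.Walk u u),
      w.IsCycle → Odd w.length → 2 * φ + 1 ≤ w.length) :
    ∃ (A : LBAlgo S) (ord : ∀ u : V, Fin S.d ≃ {v : V // S.Adj u v})
      (ρ : ℕ → V → Fin S.d),
      IsRotorRouter S A ord ρ ∧
      ∀ t, 1 ≤ t → S.d * (φ - 1) ≤ disc A t :=
  rotorRouter_lower_bound_general V S φ hφ hodd hgirth
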